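/- Let (R, m) be a local domain with a closure operation cl satisfying the big axioms. If α: R → M is a phantom extension, then α(1) ∉ mM. -/

import Mathlib

def IsFullSOP {R : Type} [CommRing R] [IsLocalRing R] {d : ℕ} (y : Fin d → R) : Prop :=
  ringKrullDim R = d ∧
    IsLocalRing.maximalIdeal R ≤ (Ideal.span (Set.range y)).radical

def IsPartialSOP {R : Type} [CommRing R] [IsLocalRing R] {k : ℕ} (x : Fin k → R) : Prop :=
  ∃ (d : ℕ) (y : Fin d → R), IsFullSOP y ∧
    ∃ ι : Fin k → Fin d, Function.Injective ι ∧ ∀ i, y (ι i) = x i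

/-- `α : R → M` is a phantom extension w.r.t. `cl`: `α` is injective and for
some (equivalently, every) free presentation `G →ν F →μ Q → 0` of `Q = M/α(R)`
with lifting `μ̃` and induced `ν̃ : G → R`, one has
`ν̃ ∈ (Im ν^∨)^cl_{G^∨}` where `ν^∨(h) = h ∘ ν`. -/
def IsPhantom {R : Type} [CommRing R] [IsLocalRing R]
    (cl : ∀ (W : Type) [AddCommGroup W] [Module R W], Submodule R W → Submodule R W)
    {M : Type} [AddCommGroup M] [Module R M] (α : R →ₗ[R] M) : Prop :=
  Function.Injective α ∧
  ∃ (G F : Type) (_ : AddCommGroup G) (_ : Module R G) (_ : Module.Free R G)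
    (_ : AddCommGroup F) (_ : Module R F) (_ : Module.Free R F)
    (ν : G →ₗ[R] F) (μ : F →ₗ[R] (M ⧸ LinearMap.range α))
    (μt : F →ₗ[R] M) (νt : G →ₗ[R] R),
      Function.Surjective μ ∧ LinearMap.range ν = LinearMap.ker μ ∧
      (LinearMap.range α).mkQ.comp μt = μ ∧ α.comp νt = μt.comp ν ∧
      νt ∈ cl (G →ₗ[R] R) (LinearMap.range (LinearMap.lcomp R R ν))

/-! If `α 1 ∈ mM`, then, as `M = α(R) + μ̃(F)` and `1 - a` is a unit for `a ∈ m`, we can write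
`α 1 = μ̃ f` with `f ∈ mF`. Then `f` dies in `Q`, so `f = ν g`, and injectivity of `α` gives
`ν̃ g = 1`. Evaluation at `g` sends each `h ∘ ν` to `h f ∈ m`; by functoriality and monotonicity
of `cl` and closedness of `m` it also sends `(Im ν^∨)^cl` into `m`, yet it sends `ν̃` to `1`. -/

open IsLocalRing

section

variable {R : Type} [CommRing R]

theorem LinearMap.apply_mem_of_mem_smul_top {F : Type} [AddCommGroup F] [Module R F]
    {I : Ideal R} (k : F →ₗ[R] R) {f : F} (hf : f ∈ I • (⊤ : Submodule R F)) : k f ∈ I := by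
  simpa only [Submodule.mem_comap, smul_eq_mul, Ideal.mul_top] using
    Submodule.smul_top_le_comap_smul_top I k hf

theorem Submodule.sup_range_eq_top_of_surjective_mkQ_comp {M F : Type} [AddCommGroup M]
    [Module R M] [AddCommGroup F] [Module R F] (N : Submodule R M) {φ : F →ₗ[R] M}
    (h : Function.Surjective (N.mkQ ∘ₗ φ)) : N ⊔ LinearMap.range φ = ⊤ := by
  rw [← Submodule.map_mkQ_eq_top, ← LinearMap.range_comp, LinearMap.range_eq_top.2 h]

theorem IsLocalRing.exists_mem_smul_top_apply_eq_map_one [IsLocalRing R] {M F : Type}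
    [AddCommGroup M] [Module R M] [AddCommGroup F] [Module R F] (α : R →ₗ[R] M)
    (φ : F →ₗ[R] M) (htop : LinearMap.range α ⊔ LinearMap.range φ = ⊤)
    (h : α 1 ∈ maximalIdeal R • (⊤ : Submodule R M)) :
    ∃ f ∈ maximalIdeal R • (⊤ : Submodule R F), φ f = α 1 := by
  rw [← htop, Submodule.smul_sup, ← Submodule.map_top, ← Submodule.map_top,
    ← Submodule.map_smul'', ← Submodule.map_smul''] at h
  obtain ⟨_, ⟨a, ha, rfl⟩, _, ⟨f, hf, rfl⟩, hsum⟩ := Submodule.mem_sup.1 h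
  obtain ⟨u, hu⟩ := isUnit_one_sub_self_of_mem_nonunits a
    (LinearMap.id.apply_mem_of_mem_smul_top ha)
  refine ⟨((u⁻¹ : Rˣ) : R) • f, Submodule.smul_mem _ _ hf, ?_⟩
  have hφf : φ f = α (1 - a) := by rw [map_sub, ← hsum, add_sub_cancel_left]
  rw [map_smul, hφf, ← map_smul, ← hu, smul_eq_mul, Units.inv_mul]

theorem map_closure_le_of_map_le
    (cl : ∀ (M : Type) [AddCommGroup M] [Module R M], Submodule R M → Submodule R M)
    (mono : ∀ (W : Type) [AddCommGroup W] [Module R W] (N M : Submodule R W),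
      N ≤ M → cl W N ≤ cl W M)
    (functorial : ∀ (M W : Type) [AddCommGroup M] [Module R M] [AddCommGroup W] [Module R W]
      (f : M →ₗ[R] W) (N : Submodule R M), (cl M N).map f ≤ cl W (N.map f))
    {I : Ideal R} (hI : cl R I = I) {W : Type} [AddCommGroup W] [Module R W]
    (e : W →ₗ[R] R) {N : Submodule R W} (hN : N.map e ≤ I) : (cl W N).map e ≤ I :=
  (functorial W R e N).trans ((mono R _ _ hN).trans hI.le)

end

theorem stmt11_general {R : Type} [CommRing R] [IsLocalRing R]
    (cl : ∀ (M : Type) [AddCommGroup M] [Module R M], Submodule R M → Submodule R M)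
    (ax3 : ∀ (W : Type) [AddCommGroup W] [Module R W] (N M : Submodule R W),
      N ≤ M → cl W N ≤ cl W M)
    (ax4 : ∀ (M W : Type) [AddCommGroup M] [Module R M] [AddCommGroup W] [Module R W]
      (f : M →ₗ[R] W) (N : Submodule R M), (cl M N).map f ≤ cl W (N.map f))
    (ax6 : cl R (IsLocalRing.maximalIdeal R) = IsLocalRing.maximalIdeal R)
    {M : Type} [AddCommGroup M] [Module R M] (α : R →ₗ[R] M)
    (hph : IsPhantom cl α) :
    α 1 ∉ (IsLocalRing.maximalIdeal R) • (⊤ : Submodule R M) := by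
  intro hmem
  obtain ⟨hinj, G, F, _, _, _, _, _, _, ν, μ, μt, νt, hμ, hker, hcomp, hνt, hcl⟩ := hph
  have htop := (LinearMap.range α).sup_range_eq_top_of_surjective_mkQ_comp (hcomp ▸ hμ)
  obtain ⟨f, hf, hμtf⟩ := exists_mem_smul_top_apply_eq_map_one α μt htop hmem
  obtain ⟨g, rfl⟩ : f ∈ LinearMap.range ν := by
    rw [hker, LinearMap.mem_ker, ← hcomp, LinearMap.comp_apply, hμtf, Submodule.mkQ_apply,
      Submodule.Quotient.mk_eq_zero]
    exact LinearMap.mem_range_self α 1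
  have hνtg : νt g = 1 := hinj (by rw [← LinearMap.comp_apply, hνt, LinearMap.comp_apply, hμtf])
  have hmap : (LinearMap.range (LinearMap.lcomp R R ν)).map (LinearMap.applyₗ g) ≤
      maximalIdeal R := by
    rintro _ ⟨_, ⟨k, rfl⟩, rfl⟩
    exact k.apply_mem_of_mem_smul_top hf
  have hone := map_closure_le_of_map_le cl ax3 ax4 ax6 (LinearMap.applyₗ g) hmap ⟨νt, hcl, rfl⟩
  rw [LinearMap.applyₗ_apply_apply, hνtg] at hone
  exact (mem_maximalIdeal 1).1 hone isUnit_one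

/-- over a local domain with a closure operation satisfying the
big axioms, a phantom extension `α : R → M` satisfies `α 1 ∉ mM`. -/
theorem stmt11 {R : Type} [CommRing R] [IsDomain R] [IsLocalRing R]
    (cl : ∀ (M : Type) [AddCommGroup M] [Module R M], Submodule R M → Submodule R M)
    (ax1 : ∀ (M : Type) [AddCommGroup M] [Module R M] (N : Submodule R M), N ≤ cl M N)
    (ax2 : ∀ (M : Type) [AddCommGroup M] [Module R M] (N : Submodule R M),
      cl M (cl M N) = cl M N)
    (ax3 : ∀ (W : Type) [AddCommGroup W] [Module R W] (N M : Submodule R W),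
      N ≤ M → cl W N ≤ cl W M)
    (ax4 : ∀ (M W : Type) [AddCommGroup M] [Module R M] [AddCommGroup W] [Module R W]
      (f : M →ₗ[R] W) (N : Submodule R M), (cl M N).map f ≤ cl W (N.map f))
    (ax5 : ∀ (M : Type) [AddCommGroup M] [Module R M] (N : Submodule R M),
      cl M N = N → cl (M ⧸ N) (⊥ : Submodule R (M ⧸ N)) = ⊥)
    (ax6 : cl R (IsLocalRing.maximalIdeal R) = IsLocalRing.maximalIdeal R)
    (ax7 : ∀ (k : ℕ) (x : Fin (k + 1) → R), IsPartialSOP x →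
      ∀ (M : Type) [AddCommGroup M] [Module R M]
        (f : M →ₗ[R] (R ⧸ Ideal.span (Set.range fun i : Fin k => x i.castSucc))),
        Function.Surjective f → ∀ v : M,
          f v = Submodule.Quotient.mk (x (Fin.last k)) →
          cl M (Submodule.span R {v}) ⊓ LinearMap.ker f ≤
            cl M ((Ideal.span (Set.range fun i : Fin k => x i.castSucc)) •
              Submodule.span R {v}))
    {M : Type} [AddCommGroup M] [Module R M] (α : R →ₗ[R] M)
    (hph : IsPhantom cl α) :
    α 1 ∉ (IsLocalRing.maximalIdeal R) • (⊤ : Submodule R M) :=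
  stmt11_general cl ax3 ax4 ax6 α hph
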